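/- Corollary (invariance plus population optimality yields sample optimality, and sample-optimal encoders exist): Let Q be a probing family containing all linear predictors and closed under vector manipulation. Every encoder that is population optimal for the ∼-invariant tasks T∼ and Q and is ∼-invariant is sample optimal for (T∼, Q). Moreover, such an encoder exists (e.g., the one-hot encoding of a maximal invariant). -/

import Mathlib

open scoped Classical
open Finset

namespace ISSL

/-- Number of equivalence classes of the equivalence relation `r` on `X`. -/
noncomputable def nequiv {X : Type*} (r : Setoid X) : ℕ := Nat.card (Quotient r)

noncomputable instance instFintypeQuot {X : Type*} [Fintype X] (r : Setoid X) :
    Fintype (Quotient r) := Fintype.ofFinite _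

/-- `M` is a maximal invariant for `r`: `M x = M x'` iff `x ∼ x'`. -/
def IsMaximalInvariant {X : Type*} (r : Setoid X) {k : ℕ} (M : X → Fin k) : Prop :=
  ∀ x x', M x = M x' ↔ r x x'

/-- A map is `∼`-invariant if it is constant on equivalence classes. -/
def IsInvariant {X : Type*} (r : Setoid X) {Z : Type*} (φ : X → Z) : Prop :=
  ∀ x x', r x x' → φ x = φ x'

/-- Argmax prediction `pred(v) = argmax_i v[i]` for a vector-output predictor. -/
noncomputable def predArg {k : ℕ} [NeZero k] (v : Fin k → ℝ) : Fin k :=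
  Classical.choose ((Finset.univ : Finset (Fin k)).exists_max_image v
    ⟨⟨0, Nat.pos_of_ne_zero (NeZero.ne k)⟩, Finset.mem_univ _⟩)

/-- Binary prediction `1[v ≥ 0]` from a scalar logit. -/
noncomputable def predBin (v : Fin 1 → ℝ) : Fin 2 := if 0 ≤ v 0 then 1 else 0

/-- A probing family on `ℝ^d`: for each output arity `k`, a set of maps `ℝ^d → ℝ^k`. -/
structure ProbingFamily (d : ℕ) where
  mem : (k : ℕ) → Set ((Fin d → ℝ) → (Fin k → ℝ))

/-- The linear probing family: all maps `z ↦ Wᵀ z`. -/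
def linearFamily (d : ℕ) : ProbingFamily d :=
  ⟨fun k => {f | ∃ W : Matrix (Fin d) (Fin k) ℝ, ∀ z j, f z j = ∑ i, W i j * z i}⟩

/-- `Q` contains all linear predictors. -/
def ContainsLinear {d : ℕ} (Q : ProbingFamily d) : Prop :=
  ∀ k, (linearFamily d).mem k ⊆ Q.mem k

/-- `Q` is closed under vector manipulation: concatenation of two members, coordinate
indexing of a member, and sums of two scalar-output members. -/
def ClosedUnderVectorManipulation {d : ℕ} (Q : ProbingFamily d) : Prop :=
  (∀ (k k' : ℕ) (f : (Fin d → ℝ) → Fin k → ℝ) (g : (Fin d → ℝ) → Fin k' → ℝ),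
      f ∈ Q.mem k → g ∈ Q.mem k' → (fun z => Fin.append (f z) (g z)) ∈ Q.mem (k + k')) ∧
  (∀ (k : ℕ) (f : (Fin d → ℝ) → Fin k → ℝ), f ∈ Q.mem k →
      ∀ i : Fin k, (fun z (_ : Fin 1) => f z i) ∈ Q.mem 1) ∧
  (∀ f g : (Fin d → ℝ) → Fin 1 → ℝ, f ∈ Q.mem 1 → g ∈ Q.mem 1 →
      (fun z j => f z j + g z j) ∈ Q.mem 1)

/-- The classification rules induced by the probing family at arity `k`: for `k = 2`
a scalar-output predictor with sign prediction, for `k ≥ 3` a `k`-output predictor with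
argmax prediction. -/
noncomputable def rules {d : ℕ} (Q : ProbingFamily d) : (k : ℕ) → Set ((Fin d → ℝ) → Fin k)
  | 0 => ∅
  | 1 => ∅
  | 2 => {h | ∃ f ∈ Q.mem 1, ∀ z, h z = predBin (f z)}
  | (n + 3) => {h | ∃ f ∈ Q.mem (n + 3), ∀ z, h z = predArg (f z)}

/-- A `k`-ary `∼`-invariant task: a joint distribution on `X × Fin k` such that for every
input the most likely label is unique and invariant under `∼`. -/
structure InvTask (X : Type*) [Fintype X] (r : Setoid X) (k : ℕ) where
  p : X → Fin k → ℝ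
  nonneg : ∀ x y, 0 ≤ p x y
  sum_one : ∑ x : X, ∑ y : Fin k, p x y = 1
  label : X → Fin k
  label_argmax : ∀ x y, y ≠ label x → p x y < p x (label x)
  label_inv : ∀ x x', r x x' → label x = label x'

variable {X : Type*} [Fintype X] {r : Setoid X} {d k : ℕ}

/-- Population 0-1 risk of a classification rule `h` through encoder `φ` on task `t`. -/
noncomputable def risk (t : InvTask X r k) (φ : X → Fin d → ℝ)
    (h : (Fin d → ℝ) → Fin k) : ℝ :=
  ∑ x : X, ∑ y : Fin k, t.p x y * (if y = h (φ x) then 0 else 1)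

/-- Bayes error of task `t`. -/
noncomputable def bayes (t : InvTask X r k) : ℝ := 1 - ∑ x : X, t.p x (t.label x)

/-- `φ` is population optimal: the best probe realizes the Bayes error on every invariant task. -/
noncomputable def PopOptimal (r : Setoid X) (Q : ProbingFamily d)
    (φ : X → Fin d → ℝ) : Prop :=
  ∀ k : ℕ, 2 ≤ k → k ≤ nequiv r → ∀ t : InvTask X r k,
    sInf ((fun h => risk t φ h) '' rules Q k) = bayes t

/-- Input marginal of task `t`. -/
noncomputable def marginal (t : InvTask X r k) (x : X) : ℝ := ∑ y : Fin k, t.p x y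

/-- Empirical 0-1 risk of rule `h` on a dataset of inputs labeled by the most likely label. -/
noncomputable def empRisk (t : InvTask X r k) (φ : X → Fin d → ℝ)
    (h : (Fin d → ℝ) → Fin k) {n : ℕ} (D : Fin n → X) : ℝ :=
  (∑ i : Fin n, if t.label (D i) = h (φ (D i)) then (0 : ℝ) else 1) / n

/-- `h` is an empirical risk minimizer on dataset `D`. -/
noncomputable def IsERM (Q : ProbingFamily d) (t : InvTask X r k) (φ : X → Fin d → ℝ)
    {n : ℕ} (D : Fin n → X) (h : (Fin d → ℝ) → Fin k) : Prop :=
  h ∈ rules Q k ∧ ∀ h' ∈ rules Q k, empRisk t φ h D ≤ empRisk t φ h' D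

/-- Excess risk of ERMs: worst population risk of an ERM minus the Bayes error. -/
noncomputable def excessRisk (Q : ProbingFamily d) (t : InvTask X r k)
    (φ : X → Fin d → ℝ) {n : ℕ} (D : Fin n → X) : ℝ :=
  sSup ((fun h => risk t φ h) '' {h | IsERM Q t φ D h}) - bayes t

/-- Expected excess risk over datasets of `n` i.i.d. inputs labeled by the most likely label. -/
noncomputable def expExcess (Q : ProbingFamily d) (t : InvTask X r k)
    (φ : X → Fin d → ℝ) (n : ℕ) : ℝ :=
  ∑ D : Fin n → X, (∏ i, marginal t (D i)) * excessRisk Q t φ D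

/-- Worst-case (over invariant tasks) expected excess risk of ERMs. -/
noncomputable def worstExcess (r : Setoid X) (Q : ProbingFamily d)
    (φ : X → Fin d → ℝ) (n : ℕ) : ℝ :=
  sSup {e : ℝ | ∃ k : ℕ, 2 ≤ k ∧ k ≤ nequiv r ∧ ∃ t : InvTask X r k, e = expExcess Q t φ n}

/-- `φ` is sample optimal: population optimal and minimizing the worst-case expected
excess risk of ERMs among population-optimal encoders, for every sample size. -/
noncomputable def SampleOptimal (r : Setoid X) (Q : ProbingFamily d)
    (φ : X → Fin d → ℝ) : Prop :=
  PopOptimal r Q φ ∧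
    ∀ n : ℕ, 1 ≤ n → ∀ φ' : X → Fin d → ℝ, PopOptimal r Q φ' →
      worstExcess r Q φ n ≤ worstExcess r Q φ' n

/-- Probability of an equivalence class under the input marginal of `t`. -/
noncomputable def classProb (t : InvTask X r k) (c : Quotient r) : ℝ :=
  ∑ x : X, if Quotient.mk r x = c then marginal t x else 0

/-- Conditional probability of label `y` given the equivalence class `c` under `t`. -/
noncomputable def classCond (t : InvTask X r k) (c : Quotient r) (y : Fin k) : ℝ :=
  (∑ x : X, if Quotient.mk r x = c then t.p x y else 0) / classProb t c

/-- `φ` is `(X,∼)`-shattered by `Q`: every invariant binary labeling is realized. -/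
noncomputable def InvShattered (r : Setoid X) (Q : ProbingFamily d)
    (φ : X → Fin d → ℝ) : Prop :=
  ∀ c : X → Fin 2, IsInvariant r c → ∃ f ∈ Q.mem 1, ∀ x, c x = predBin (f (φ x))

/-- A set `Z ⊆ ℝ^d` is classically shattered by `Q`. -/
noncomputable def ClassicallyShattered {d : ℕ} (Q : ProbingFamily d)
    (Z : Set (Fin d → ℝ)) : Prop :=
  ∀ c : (Fin d → ℝ) → Fin 2, ∃ f ∈ Q.mem 1, ∀ z ∈ Z, c z = predBin (f z)


/-! ### Auxiliary lemmas -/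

section Aux

lemma risk_eq (t : InvTask X r k) (φ : X → Fin d → ℝ) (h : (Fin d → ℝ) → Fin k) :
    risk t φ h = 1 - ∑ x : X, t.p x (h (φ x)) := by
  unfold risk
  have hx : ∀ x : X, ∑ y : Fin k, t.p x y * (if y = h (φ x) then 0 else 1)
      = (∑ y : Fin k, t.p x y) - t.p x (h (φ x)) := by
    intro x
    have : ∀ y : Fin k, t.p x y * (if y = h (φ x) then (0:ℝ) else 1)
        = t.p x y - (if y = h (φ x) then t.p x y else 0) := by
      intro y; split_ifs <;> ring
    rw [Finset.sum_congr rfl (fun y _ => this y), Finset.sum_sub_distrib,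
      Finset.sum_ite_eq' Finset.univ (h (φ x)) (t.p x)]
    simp
  rw [Finset.sum_congr rfl (fun x _ => hx x), Finset.sum_sub_distrib, t.sum_one]

lemma p_le_label (t : InvTask X r k) (x : X) (y : Fin k) :
    t.p x y ≤ t.p x (t.label x) := by
  by_cases hy : y = t.label x
  · rw [hy]
  · exact le_of_lt (t.label_argmax x y hy)

lemma bayes_le_risk (t : InvTask X r k) (φ : X → Fin d → ℝ) (h : (Fin d → ℝ) → Fin k) :
    bayes t ≤ risk t φ h := by
  rw [risk_eq, bayes]
  have : ∑ x : X, t.p x (h (φ x)) ≤ ∑ x : X, t.p x (t.label x) :=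
    Finset.sum_le_sum fun x _ => p_le_label t x _
  linarith

lemma risk_le_one (t : InvTask X r k) (φ : X → Fin d → ℝ) (h : (Fin d → ℝ) → Fin k) :
    risk t φ h ≤ 1 := by
  rw [risk_eq]
  have : (0:ℝ) ≤ ∑ x : X, t.p x (h (φ x)) :=
    Finset.sum_nonneg fun x _ => t.nonneg x _
  linarith

lemma sum_label_le_one (t : InvTask X r k) : ∑ x : X, t.p x (t.label x) ≤ 1 := by
  rw [← t.sum_one]
  apply Finset.sum_le_sum
  intro x _
  exact Finset.single_le_sum (fun y _ => t.nonneg x y) (Finset.mem_univ _)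

lemma bayes_nonneg (t : InvTask X r k) : 0 ≤ bayes t := by
  have := sum_label_le_one t
  rw [bayes]; linarith

lemma eq_label_of_risk_eq_bayes {t : InvTask X r k} {φ : X → Fin d → ℝ}
    {h : (Fin d → ℝ) → Fin k} (heq : risk t φ h = bayes t) :
    ∀ x, h (φ x) = t.label x := by
  have hsum : ∑ x : X, (t.p x (t.label x) - t.p x (h (φ x))) = 0 := by
    rw [Finset.sum_sub_distrib]
    rw [risk_eq, bayes] at heq
    linarith
  intro x
  by_contra hne
  have hlt : t.p x (h (φ x)) < t.p x (t.label x) := t.label_argmax x _ hne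
  have hnonneg : ∀ y ∈ Finset.univ, 0 ≤ t.p y (t.label y) - t.p y (h (φ y)) :=
    fun y _ => sub_nonneg.2 (p_le_label t y _)
  have := (Finset.sum_eq_zero_iff_of_nonneg hnonneg).1 hsum x (Finset.mem_univ x)
  linarith

lemma exists_task [Nonempty X] (hk : 2 ≤ k) (c : X → Fin k) (hc : IsInvariant r c) :
    ∃ t : InvTask X r k, t.label = c := by
  have hN : (0:ℝ) < (Fintype.card X : ℝ) := by
    exact_mod_cast Fintype.card_pos
  have hkp : (0:ℝ) < (k:ℝ) + 1 := by positivity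
  have hden : (0:ℝ) < (Fintype.card X : ℝ) * ((k:ℝ) + 1) := by positivity
  have hsumy : ∀ x : X, ∑ y : Fin k, (if y = c x then (2:ℝ) else 1) = (k:ℝ) + 1 := by
    intro x
    have h1 : ∀ y : Fin k, (if y = c x then (2:ℝ) else 1)
        = 1 + (if y = c x then (1:ℝ) else 0) := by
      intro y; split_ifs <;> norm_num
    rw [Finset.sum_congr rfl (fun y _ => h1 y), Finset.sum_add_distrib,
      Finset.sum_ite_eq' Finset.univ (c x) (fun _ => (1:ℝ))]
    simp
  refine ⟨⟨fun x y => (if y = c x then 2 else 1) / ((Fintype.card X : ℝ) * ((k:ℝ) + 1)),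
    ?_, ?_, c, ?_, hc⟩, rfl⟩
  · intro x y
    apply div_nonneg _ (le_of_lt hden)
    split_ifs <;> norm_num
  · have : ∀ x : X, ∑ y : Fin k,
        (if y = c x then (2:ℝ) else 1) / ((Fintype.card X : ℝ) * ((k:ℝ) + 1))
        = 1 / (Fintype.card X : ℝ) := by
      intro x
      rw [← Finset.sum_div, hsumy x]
      field_simp
    rw [Finset.sum_congr rfl (fun x _ => this x), Finset.sum_const,
      Finset.card_univ, nsmul_eq_mul, mul_one_div, div_self (ne_of_gt hN)]
  · intro x y hy
    beta_reduce
    rw [if_neg hy, if_pos rfl]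
    exact (div_lt_div_iff_of_pos_right hden).2 (by norm_num)

lemma nonempty_of_nequiv (h2 : 2 ≤ nequiv r) : Nonempty X := by
  have : 0 < Nat.card (Quotient r) := by
    rw [← nequiv]; omega
  have hq : Nonempty (Quotient r) := (Nat.card_pos_iff.mp this).1
  obtain ⟨q⟩ := hq
  obtain ⟨x, -⟩ := Quotient.exists_rep q
  exact ⟨x⟩

lemma predArg_spec {m : ℕ} [NeZero m] (v : Fin m → ℝ) : ∀ i, v i ≤ v (predArg v) := by
  have hs := Classical.choose_spec ((Finset.univ : Finset (Fin m)).exists_max_image v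
    ⟨⟨0, Nat.pos_of_ne_zero (NeZero.ne m)⟩, Finset.mem_univ _⟩)
  exact fun i => hs.2 i (Finset.mem_univ i)

lemma predArg_eq {m : ℕ} [NeZero m] (v : Fin m → ℝ) (j : Fin m)
    (hj : ∀ i, i ≠ j → v i < v j) : predArg v = j := by
  by_contra hne
  have h1 := predArg_spec v j
  have h2 := hj _ hne
  linarith

lemma rules_two (Q : ProbingFamily d) :
    rules Q 2 = {h | ∃ f ∈ Q.mem 1, ∀ z, h z = predBin (f z)} := rfl

lemma rules_succ (Q : ProbingFamily d) (m : ℕ) :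
    rules Q (m + 3) = {h | ∃ f ∈ Q.mem (m + 3), ∀ z, h z = predArg (f z)} := rfl

lemma zero_mem_lin (m : ℕ) : (fun (_ : Fin d → ℝ) (_ : Fin m) => (0:ℝ)) ∈
    (linearFamily d).mem m :=
  ⟨0, by intro z j; simp [Matrix.zero_apply]⟩

lemma rules_nonempty (Q : ProbingFamily d) (hlin : ContainsLinear Q) (hk : 2 ≤ k) :
    (rules Q k).Nonempty := by
  rcases k with _|_|_|m
  · omega
  · omega
  · exact ⟨fun z => predBin (fun _ => 0), ⟨_, hlin 1 (zero_mem_lin 1), fun z => rfl⟩⟩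
  · exact ⟨fun z => predArg (fun _ : Fin (m+3) => (0:ℝ)),
      ⟨_, hlin (m+3) (zero_mem_lin (m+3)), fun z => rfl⟩⟩

lemma exists_rule_label {Q : ProbingFamily d} (hlin : ContainsLinear Q)
    {φ : X → Fin d → ℝ} (hpop : PopOptimal r Q φ) (hk2 : 2 ≤ k) (hkn : k ≤ nequiv r)
    (t : InvTask X r k) : ∃ h ∈ rules Q k, ∀ x, h (φ x) = t.label x := by
  have hS : sInf ((fun h => risk t φ h) '' rules Q k) = bayes t := hpop k hk2 hkn t
  have hne : ((fun h => risk t φ h) '' rules Q k).Nonempty :=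
    (rules_nonempty Q hlin hk2).image _
  have hfin : ((fun h => risk t φ h) '' rules Q k).Finite := by
    apply Set.Finite.subset
      (Set.finite_range (fun g : X → Fin k => 1 - ∑ x : X, t.p x (g x)))
    rintro _ ⟨h, -, rfl⟩
    exact ⟨fun x => h (φ x), (risk_eq t φ h).symm⟩
  have hmem := hne.csInf_mem hfin
  rw [hS] at hmem
  obtain ⟨h, hh, hrisk⟩ := hmem
  exact ⟨h, hh, eq_label_of_risk_eq_bayes hrisk⟩

lemma exists_rule_realizing {Q : ProbingFamily d} (hlin : ContainsLinear Q)
    {φ : X → Fin d → ℝ} (hpop : PopOptimal r Q φ) (hk2 : 2 ≤ k) (hkn : k ≤ nequiv r)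
    (c : X → Fin k) (hc : IsInvariant r c) :
    ∃ h ∈ rules Q k, ∀ x, h (φ x) = c x := by
  have : Nonempty X := nonempty_of_nequiv (le_trans hk2 hkn)
  obtain ⟨t, ht⟩ := exists_task hk2 c hc
  obtain ⟨h, hh, hlab⟩ := exists_rule_label hlin hpop hk2 hkn t
  exact ⟨h, hh, fun x => by rw [hlab x, ht]⟩

lemma empRisk_nonneg (t : InvTask X r k) (φ : X → Fin d → ℝ)
    (h : (Fin d → ℝ) → Fin k) {n : ℕ} (D : Fin n → X) : 0 ≤ empRisk t φ h D := by
  apply div_nonneg _ (Nat.cast_nonneg n)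
  apply Finset.sum_nonneg
  intro i _
  split_ifs <;> norm_num

lemma empRisk_zero {t : InvTask X r k} {φ : X → Fin d → ℝ}
    {h : (Fin d → ℝ) → Fin k} {n : ℕ} {D : Fin n → X}
    (hagree : ∀ i, t.label (D i) = h (φ (D i))) : empRisk t φ h D = 0 := by
  unfold empRisk
  rw [Finset.sum_eq_zero (fun i _ => by rw [if_pos (hagree i)])]
  simp

lemma isERM_of_agree {Q : ProbingFamily d} {t : InvTask X r k} {φ : X → Fin d → ℝ}
    {h : (Fin d → ℝ) → Fin k} {n : ℕ} {D : Fin n → X}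
    (hmem : h ∈ rules Q k) (hagree : ∀ i, t.label (D i) = h (φ (D i))) :
    IsERM Q t φ D h := by
  refine ⟨hmem, fun h' _ => ?_⟩
  rw [empRisk_zero hagree]
  exact empRisk_nonneg t φ h' D

lemma agree_of_isERM {Q : ProbingFamily d} (hlin : ContainsLinear Q)
    {φ : X → Fin d → ℝ} (hpop : PopOptimal r Q φ) (hk2 : 2 ≤ k) (hkn : k ≤ nequiv r)
    {t : InvTask X r k} {n : ℕ} (hn : 1 ≤ n) {D : Fin n → X}
    {h : (Fin d → ℝ) → Fin k} (herm : IsERM Q t φ D h) :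
    ∀ i, t.label (D i) = h (φ (D i)) := by
  obtain ⟨h₀, hm₀, hlab₀⟩ := exists_rule_label hlin hpop hk2 hkn t
  have h0 : empRisk t φ h₀ D = 0 := empRisk_zero (fun i => (hlab₀ (D i)).symm)
  have hle := herm.2 h₀ hm₀
  rw [h0] at hle
  have hge := empRisk_nonneg t φ h D
  have heq : empRisk t φ h D = 0 := le_antisymm hle hge
  unfold empRisk at heq
  have hnn : (0:ℝ) < n := by exact_mod_cast hn
  rw [div_eq_zero_iff] at heq
  have hsum : ∑ i : Fin n, (if t.label (D i) = h (φ (D i)) then (0:ℝ) else 1) = 0 := by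
    rcases heq with h' | h'
    · exact h'
    · exact absurd h' (by positivity)
  intro i
  have := (Finset.sum_eq_zero_iff_of_nonneg
    (fun j _ => by split_ifs <;> norm_num)).1 hsum i (Finset.mem_univ i)
  by_contra hne
  rw [if_neg hne] at this
  norm_num at this

lemma sum_weights (t : InvTask X r k) (n : ℕ) :
    ∑ D : Fin n → X, (∏ i, marginal t (D i)) = 1 := by
  have : ∑ D : Fin n → X, (∏ i, marginal t (D i))
      = ∏ _i : Fin n, ∑ x : X, marginal t x := by
    rw [Finset.prod_univ_sum]
    rw [← Fintype.piFinset_univ]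
  rw [this]
  have hm : ∑ x : X, marginal t x = 1 := by
    unfold marginal; rw [t.sum_one]
  rw [hm]
  simp

lemma marginal_nonneg (t : InvTask X r k) (x : X) : 0 ≤ marginal t x :=
  Finset.sum_nonneg fun y _ => t.nonneg x y

lemma weights_nonneg (t : InvTask X r k) {n : ℕ} (D : Fin n → X) :
    0 ≤ ∏ i, marginal t (D i) :=
  Finset.prod_nonneg fun i _ => marginal_nonneg t (D i)

lemma excessRisk_le_one (Q : ProbingFamily d) (t : InvTask X r k)
    (φ : X → Fin d → ℝ) {n : ℕ} (D : Fin n → X) : excessRisk Q t φ D ≤ 1 := by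
  unfold excessRisk
  have h1 : sSup ((fun h => risk t φ h) '' {h | IsERM Q t φ D h}) ≤ 1 := by
    apply Real.sSup_le _ zero_le_one
    rintro _ ⟨h, -, rfl⟩
    exact risk_le_one t φ h
  have h2 := bayes_nonneg t
  linarith

lemma expExcess_le_one (Q : ProbingFamily d) (t : InvTask X r k)
    (φ : X → Fin d → ℝ) (n : ℕ) : expExcess Q t φ n ≤ 1 := by
  unfold expExcess
  calc ∑ D : Fin n → X, (∏ i, marginal t (D i)) * excessRisk Q t φ D
      ≤ ∑ D : Fin n → X, (∏ i, marginal t (D i)) * 1 := by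
        apply Finset.sum_le_sum
        intro D _
        exact mul_le_mul_of_nonneg_left (excessRisk_le_one Q t φ D) (weights_nonneg t D)
    _ = 1 := by
        simp only [mul_one]
        exact sum_weights t n

lemma excessRisk_le {Q : ProbingFamily d} (hlin : ContainsLinear Q)
    {φ φ' : X → Fin d → ℝ} (hpop : PopOptimal r Q φ) (hinv : IsInvariant r φ)
    (hpop' : PopOptimal r Q φ') (hk2 : 2 ≤ k) (hkn : k ≤ nequiv r)
    (t : InvTask X r k) {n : ℕ} (hn : 1 ≤ n) (D : Fin n → X) :
    excessRisk Q t φ D ≤ excessRisk Q t φ' D := by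
  unfold excessRisk
  apply sub_le_sub_right
  apply csSup_le_csSup
  · exact ⟨1, by rintro _ ⟨h, -, rfl⟩; exact risk_le_one t φ' h⟩
  · obtain ⟨h₀, hm₀, hlab₀⟩ := exists_rule_label hlin hpop hk2 hkn t
    exact ⟨risk t φ h₀, ⟨h₀, isERM_of_agree hm₀ (fun i => (hlab₀ (D i)).symm), rfl⟩⟩
  · rintro _ ⟨h, herm, rfl⟩
    have hginv : IsInvariant r (fun x => h (φ x)) := fun x x' hxx =>
      congrArg h (hinv x x' hxx)
    obtain ⟨h', hm', heq'⟩ := exists_rule_realizing hlin hpop' hk2 hkn _ hginv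
    have hagree := agree_of_isERM hlin hpop hk2 hkn hn herm
    refine ⟨h', isERM_of_agree hm' (fun i => ?_), ?_⟩
    · rw [heq' (D i)]; exact hagree i
    · show risk t φ' h' = risk t φ h
      rw [risk_eq, risk_eq]
      congr 1
      apply Finset.sum_congr rfl
      intro x _
      rw [heq' x]

lemma expExcess_le {Q : ProbingFamily d} (hlin : ContainsLinear Q)
    {φ φ' : X → Fin d → ℝ} (hpop : PopOptimal r Q φ) (hinv : IsInvariant r φ)
    (hpop' : PopOptimal r Q φ') (hk2 : 2 ≤ k) (hkn : k ≤ nequiv r)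
    (t : InvTask X r k) {n : ℕ} (hn : 1 ≤ n) :
    expExcess Q t φ n ≤ expExcess Q t φ' n := by
  apply Finset.sum_le_sum
  intro D _
  exact mul_le_mul_of_nonneg_left
    (excessRisk_le hlin hpop hinv hpop' hk2 hkn t hn D) (weights_nonneg t D)

lemma worstExcess_le {Q : ProbingFamily d} (hlin : ContainsLinear Q)
    (h2 : 2 ≤ nequiv r) {φ φ' : X → Fin d → ℝ}
    (hpop : PopOptimal r Q φ) (hinv : IsInvariant r φ)
    (hpop' : PopOptimal r Q φ') {n : ℕ} (hn : 1 ≤ n) :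
    worstExcess r Q φ n ≤ worstExcess r Q φ' n := by
  have hX : Nonempty X := nonempty_of_nequiv h2
  obtain ⟨t₀, -⟩ := exists_task (r := r) (k := 2) le_rfl (fun _ => 0)
    (fun _ _ _ => rfl)
  apply csSup_le
  · exact ⟨expExcess Q t₀ φ n, ⟨2, le_rfl, h2, t₀, rfl⟩⟩
  · rintro _ ⟨k, hk2, hkn, t, rfl⟩
    refine le_trans (expExcess_le hlin hpop hinv hpop' hk2 hkn t hn) ?_
    apply le_csSup
    · refine ⟨1, ?_⟩
      rintro _ ⟨k', hk2', hkn', t', rfl⟩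
      exact expExcess_le_one Q t' φ' n
    · exact ⟨k, hk2, hkn, t, rfl⟩

end Aux

/-! ### One-hot encoder -/

section OneHot

noncomputable def classIdx (r : Setoid X) : X → Fin (nequiv r) :=
  fun x => Fin.cast (by rw [nequiv, Nat.card_eq_fintype_card])
    (Fintype.equivFin (Quotient r) (Quotient.mk r x))

lemma classIdx_eq_iff (r : Setoid X) (x x' : X) :
    classIdx r x = classIdx r x' ↔ r x x' := by
  unfold classIdx
  rw [Fin.cast_injective _ |>.eq_iff, (Fintype.equivFin (Quotient r)).injective.eq_iff]
  exact Quotient.eq''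

lemma classIdx_surjective (r : Setoid X) : Function.Surjective (classIdx r) := by
  intro i
  obtain ⟨q, hq⟩ := (Fintype.equivFin (Quotient r)).surjective
    (Fin.cast (by rw [nequiv, Nat.card_eq_fintype_card]) i)
  obtain ⟨x, hx⟩ := Quotient.exists_rep q
  refine ⟨x, ?_⟩
  unfold classIdx
  rw [show Quotient.mk r x = q from hx, hq]
  ext
  simp

noncomputable def oneHot (r : Setoid X) : X → Fin (nequiv r) → ℝ :=
  fun x i => if i = classIdx r x then 1 else 0

lemma oneHot_invariant (r : Setoid X) : IsInvariant r (oneHot r) := by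
  intro x x' hxx
  unfold oneHot
  funext i
  rw [(classIdx_eq_iff r x x').2 hxx]

lemma dot_oneHot (r : Setoid X) (w : Fin (nequiv r) → ℝ) (x : X) :
    ∑ i, w i * oneHot r x i = w (classIdx r x) := by
  unfold oneHot
  have : ∀ i, w i * (if i = classIdx r x then (1:ℝ) else 0)
      = if i = classIdx r x then w i else 0 := by
    intro i; split_ifs <;> ring
  rw [Finset.sum_congr rfl (fun i _ => this i),
    Finset.sum_ite_eq' Finset.univ (classIdx r x) w]
  simp

lemma oneHot_realize (Q : ProbingFamily (nequiv r)) (hlin : ContainsLinear Q)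
    (hk2 : 2 ≤ k) (c : X → Fin k) (hc : IsInvariant r c) :
    ∃ h ∈ rules Q k, ∀ x, h (oneHot r x) = c x := by
  set σ := Function.surjInv (classIdx_surjective r) with hσ
  set c' : Fin (nequiv r) → Fin k := fun i => c (σ i) with hc'
  have hkey : ∀ x, c' (classIdx r x) = c x := by
    intro x
    apply hc
    rw [← classIdx_eq_iff r]
    exact Function.surjInv_eq (classIdx_surjective r) (classIdx r x)
  rcases k with _|_|_|m
  · omega
  · omega
  · -- k = 2 : scalar predictor with sign prediction
    set w : Fin (nequiv r) → ℝ := fun i => if c' i = 1 then 1 else -1 with hw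
    set f : (Fin (nequiv r) → ℝ) → Fin 1 → ℝ := fun z _ => ∑ i, w i * z i with hf
    have hfQ : f ∈ Q.mem 1 := by
      apply hlin 1
      exact ⟨fun i _ => w i, fun z j => rfl⟩
    refine ⟨fun z => predBin (f z), ⟨f, hfQ, fun z => rfl⟩, ?_⟩
    intro x
    have hfx : f (oneHot r x) 0 = w (classIdx r x) := dot_oneHot r w x
    have h2 : ∀ y : Fin 2, y = 0 ∨ y = 1 := by decide
    show predBin (f (oneHot r x)) = c x
    unfold predBin
    rw [hfx, ← hkey x]
    rcases h2 (c' (classIdx r x)) with h | h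
    · simp only [hw, h]
      norm_num
    · simp only [hw, h]
      norm_num
  · -- k = m + 3 : argmax prediction
    set W : Matrix (Fin (nequiv r)) (Fin (m+3)) ℝ :=
      fun i j => if j = c' i then 1 else 0 with hW
    set f : (Fin (nequiv r) → ℝ) → Fin (m+3) → ℝ :=
      fun z j => ∑ i, W i j * z i with hf
    have hfQ : f ∈ Q.mem (m+3) := by
      apply hlin (m+3)
      exact ⟨W, fun z j => rfl⟩
    refine ⟨fun z => predArg (f z), ⟨f, hfQ, fun z => rfl⟩, ?_⟩
    intro x
    have hfx : ∀ j, f (oneHot r x) j = if j = c' (classIdx r x) then 1 else 0 := by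
      intro j
      exact dot_oneHot r (fun i => W i j) x
    show predArg (f (oneHot r x)) = c x
    rw [show f (oneHot r x) = fun j => if j = c' (classIdx r x) then (1:ℝ) else 0
      from funext hfx]
    rw [← hkey x]
    apply predArg_eq
    intro i hi
    rw [if_neg hi, if_pos rfl]
    norm_num

lemma oneHot_popOptimal (Q : ProbingFamily (nequiv r)) (hlin : ContainsLinear Q) :
    PopOptimal r Q (oneHot r) := by
  intro k hk2 hkn t
  obtain ⟨h₀, hm₀, hlab₀⟩ := oneHot_realize Q hlin hk2 t.label t.label_inv
  have hrisk : risk t (oneHot r) h₀ = bayes t := by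
    rw [risk_eq, bayes]
    congr 1
    apply Finset.sum_congr rfl
    intro x _
    rw [hlab₀ x]
  apply le_antisymm
  · apply csInf_le
    · exact ⟨bayes t, by rintro _ ⟨h, -, rfl⟩; exact bayes_le_risk t _ h⟩
    · exact ⟨h₀, hm₀, hrisk⟩
  · apply le_csInf
    · exact ⟨risk t (oneHot r) h₀, ⟨h₀, hm₀, rfl⟩⟩
    · rintro _ ⟨h, -, rfl⟩
      exact bayes_le_risk t _ h

end OneHot

/-- **Corollary** (invariance plus population optimality yields sample optimality, and
sample-optimal encoders exist). -/
theorem sampleOptimal_of_invariant_popOptimal {X : Type*} [Fintype X] (r : Setoid X)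
    (hn : 2 ≤ nequiv r) :
    (∀ (d : ℕ) (Q : ProbingFamily d), ContainsLinear Q →
        ClosedUnderVectorManipulation Q →
        ∀ φ : X → Fin d → ℝ, PopOptimal r Q φ → IsInvariant r φ →
          SampleOptimal r Q φ) ∧
      (∀ Q : ProbingFamily (nequiv r), ContainsLinear Q →
          ClosedUnderVectorManipulation Q →
          ∃ φ : X → Fin (nequiv r) → ℝ, IsInvariant r φ ∧ PopOptimal r Q φ ∧
            SampleOptimal r Q φ) := by
  have part1 : ∀ (d : ℕ) (Q : ProbingFamily d), ContainsLinear Q →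
      ClosedUnderVectorManipulation Q →
      ∀ φ : X → Fin d → ℝ, PopOptimal r Q φ → IsInvariant r φ →
        SampleOptimal r Q φ := by
    intro d Q hlin _ φ hpop hinv
    refine ⟨hpop, ?_⟩
    intro n hn1 φ' hpop'
    exact worstExcess_le hlin hn hpop hinv hpop' hn1
  refine ⟨part1, ?_⟩
  intro Q hlin hclosed
  have hpop := oneHot_popOptimal Q hlin
  exact ⟨oneHot r, oneHot_invariant r, hpop,
    part1 _ Q hlin hclosed _ hpop (oneHot_invariant r)⟩

end ISSL
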